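/- arXiv:1305.0089 — 2 statements merged into one kernel-verified Lean document; each statement's English description precedes it below -/
import Mathlib

section
/- (Remark, uniform grid) Suppose the partition is uniform, i.e. x_i − x_{i−1} = h for all 1 ≤ i ≤ n and some h > 0. Let u(x) = a x² + b x + c with a, b, c ∈ ℝ. Then for every interior index 1 ≤ i ≤ n−1, the recovered gradient value satisfies g_i = u'(x_i), i.e. the gradient of any quadratic function is recovered exactly at all interior grid points. -/
/-!
Only the two cells adjacent to `x_i` meet the support of `λ_i`, and on each of them `λ_i`
integrates to half the cell length, both against `1` and against `φ_i`. Since `u_h'` is the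
chord slope of `u` on each cell, `g_i` is the chord slope of `u` over `[x_{i-1}, x_{i+1}]`,
on any grid. For a quadratic, the chord slope over an interval is the derivative at its
midpoint, which is `x_i` when the grid is uniform.
-/

open intervalIntegral

/-- The standard hat (piecewise linear nodal) basis function `φ_i` associated with the
partition `x 0 < x 1 < ... < x n`.  The branch on `[x_{i-1}, x_i]` is omitted when `i = 0`
and the branch on `[x_i, x_{i+1}]` is omitted when `i = n`. -/
noncomputable def hatFn (x : ℕ → ℝ) (n i : ℕ) : ℝ → ℝ := fun t =>
  if 0 < i ∧ x (i-1) ≤ t ∧ t ≤ x i then (t - x (i-1)) / (x i - x (i-1))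
  else if i < n ∧ x i ≤ t ∧ t ≤ x (i+1) then (x (i+1) - t) / (x (i+1) - x i)
  else 0

/-- The biorthogonal basis function `λ_i`. -/
noncomputable def biorthFn (x : ℕ → ℝ) (n i : ℕ) : ℝ → ℝ := fun t =>
  if 0 < i ∧ x (i-1) ≤ t ∧ t < x i then (2*(t - x (i-1)) + (t - x i)) / (x i - x (i-1))
  else if i < n ∧ x i ≤ t ∧ t < x (i+1) then (2*(t - x (i+1)) + (t - x i)) / (x i - x (i+1))
  else 0

/-- The piecewise derivative `u_h'` of the interpolant `u_h = Σ_j u(x_j) φ_j`: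
on each open subinterval `(x_j, x_{j+1})` it is the constant
`(u(x_{j+1}) - u(x_j)) / (x_{j+1} - x_j)`, and it is (arbitrarily) `0` at grid points and
outside `[x 0, x n]`. -/
noncomputable def interpDeriv (x : ℕ → ℝ) (n : ℕ) (u : ℝ → ℝ) : ℝ → ℝ := fun t =>
  ∑ j ∈ Finset.range n,
    if x j < t ∧ t < x (j+1) then (u (x (j+1)) - u (x j)) / (x (j+1) - x j) else 0

/-- The recovered gradient value
`g_i = (∫_α^β u_h' λ_i dx) / (∫_α^β φ_i λ_i dx)` with `α = x 0`, `β = x n`. -/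
noncomputable def recGrad (x : ℕ → ℝ) (n : ℕ) (u : ℝ → ℝ) (i : ℕ) : ℝ :=
  (∫ t in (x 0)..(x n), interpDeriv x n u t * biorthFn x n i t) /
  (∫ t in (x 0)..(x n), hatFn x n i t * biorthFn x n i t)

open Set
open MeasureTheory (volume)

theorem integral_biorth_piece (p q : ℝ) :
    ∫ t in p..q, (2 * (t - p) + (t - q)) / (q - p) = (q - p) / 2 := by
  rcases eq_or_ne p q with rfl | hpq
  · simp
  have expand : ∀ t : ℝ, (2 * (t - p) + (t - q)) / (q - p) = (3 * t - (2 * p + q)) / (q - p) :=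
    fun t => by ring
  simp only [expand, integral_div]
  rw [integral_sub (intervalIntegrable_id.const_mul _) intervalIntegrable_const,
    integral_const_mul, integral_id, integral_const, smul_eq_mul]
  field_simp [sub_ne_zero.mpr hpq.symm]
  ring

theorem integral_hat_piece_mul_biorth_piece (p q : ℝ) :
    ∫ t in p..q, (t - p) / (q - p) * ((2 * (t - p) + (t - q)) / (q - p)) = (q - p) / 2 := by
  rcases eq_or_ne p q with rfl | hpq
  · simp
  have expand : ∀ t : ℝ, (t - p) / (q - p) * ((2 * (t - p) + (t - q)) / (q - p)) =
      (3 * t ^ 2 - (5 * p + q) * t + (2 * p ^ 2 + p * q)) / (q - p) ^ 2 :=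
    fun t => by field_simp; ring
  have hsq : IntervalIntegrable (fun t : ℝ => 3 * t ^ 2) volume p q :=
    (intervalIntegrable_pow 2).const_mul _
  have hlin : IntervalIntegrable (fun t : ℝ => (5 * p + q) * t) volume p q :=
    intervalIntegrable_id.const_mul _
  simp only [expand, integral_div]
  rw [integral_add (hsq.sub hlin) intervalIntegrable_const, integral_sub hsq hlin,
    integral_const_mul, integral_const_mul, integral_pow, integral_id, integral_const,
    smul_eq_mul]
  field_simp [sub_ne_zero.mpr hpq.symm]
  ring

theorem intervalIntegrable_of_eqOn_Ioo {f g : ℝ → ℝ} {p q : ℝ} (hpq : p ≤ q)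
    (hg : Continuous g) (h : EqOn f g (Ioo p q)) : IntervalIntegrable f volume p q :=
  (hg.intervalIntegrable p q).congr_uIoo (uIoo_of_le hpq ▸ h.symm)

theorem integral_eq_of_eqOn_Ioo_pieces {g F G : ℝ → ℝ} {a p q r b : ℝ}
    (hap : a ≤ p) (hpq : p ≤ q) (hqr : q ≤ r) (hrb : r ≤ b)
    (hF : Continuous F) (hG : Continuous G)
    (h₀ : EqOn g 0 (Ioo a p)) (h₁ : EqOn g F (Ioo p q))
    (h₂ : EqOn g G (Ioo q r)) (h₃ : EqOn g 0 (Ioo r b)) :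
    ∫ t in a..b, g t = (∫ t in p..q, F t) + ∫ t in q..r, G t := by
  have i₀ := intervalIntegrable_of_eqOn_Ioo hap continuous_const h₀
  have i₁ := intervalIntegrable_of_eqOn_Ioo hpq hF h₁
  have i₂ := intervalIntegrable_of_eqOn_Ioo hqr hG h₂
  have i₃ := intervalIntegrable_of_eqOn_Ioo hrb continuous_const h₃
  rw [← integral_add_adjacent_intervals i₀ (i₁.trans (i₂.trans i₃)),
    ← integral_add_adjacent_intervals i₁ (i₂.trans i₃), ← integral_add_adjacent_intervals i₂ i₃,
    integral_congr_Ioo_of_le hap h₀, integral_congr_Ioo_of_le hpq h₁,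
    integral_congr_Ioo_of_le hqr h₂, integral_congr_Ioo_of_le hrb h₃]
  simp

theorem slope_quadratic (a b c p r : ℝ) (hpr : p ≠ r) :
    slope (fun t => a * t ^ 2 + b * t + c) p r = a * (p + r) + b := by
  rw [slope_def_field]
  field_simp [sub_ne_zero.mpr hpr.symm]
  ring

section Grid

variable {x : ℕ → ℝ} {n i j : ℕ} {t : ℝ}

theorem monotoneOn_grid (hx : ∀ k < n, x k < x (k + 1)) : MonotoneOn x (Iic n) :=
  (strictMonoOn_Iic_of_lt_succ fun m hm => by simpa using hx m hm).monotoneOn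

theorem grid_sub_one_lt (hx : ∀ k < n, x k < x (k + 1)) (hi : 0 < i) (hin : i ≤ n) :
    x (i - 1) < x i := by
  simpa [Nat.sub_add_cancel hi] using hx (i - 1) (by omega)

theorem interpDeriv_eq_slope (hx : ∀ k < n, x k < x (k + 1)) (u : ℝ → ℝ) (hj : j < n)
    (ht : t ∈ Ioo (x j) (x (j + 1))) : interpDeriv x n u t = slope u (x j) (x (j + 1)) := by
  have hmono := monotoneOn_grid hx
  rw [interpDeriv, Finset.sum_eq_single_of_mem j (Finset.mem_range.mpr hj), if_pos ⟨ht.1, ht.2⟩,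
    slope_def_field]
  intro k hk hkj
  rw [if_neg]
  rintro ⟨hk₁, hk₂⟩
  have hk : k < n := Finset.mem_range.mp hk
  rcases lt_or_gt_of_ne hkj with hlt | hgt
  · have : x (k + 1) ≤ x j := hmono (by simp; omega) (by simp; omega) (by omega)
    linarith [ht.1]
  · have : x (j + 1) ≤ x k := hmono (by simp; omega) (by simp; omega) (by omega)
    linarith [ht.2]

theorem biorthFn_eq_zero (h₁ : x (i - 1) ≤ x i) (h₂ : x i < x (i + 1))
    (ht : t ∉ Ico (x (i - 1)) (x (i + 1))) : biorthFn x n i t = 0 := by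
  rw [mem_Ico, not_and_or, not_le, not_lt] at ht
  rcases ht with ht | ht
  · rw [biorthFn, if_neg (by intro h; linarith [h.2.1]), if_neg (by intro h; linarith [h.2.1])]
  · rw [biorthFn, if_neg (by intro h; linarith [h.2.2]), if_neg (by intro h; linarith [h.2.2])]

theorem biorthFn_of_mem_left (hi : 0 < i) (ht : t ∈ Ico (x (i - 1)) (x i)) :
    biorthFn x n i t = (2 * (t - x (i - 1)) + (t - x i)) / (x i - x (i - 1)) :=
  if_pos ⟨hi, ht⟩

theorem biorthFn_of_mem_right (hi : i < n) (ht : t ∈ Ico (x i) (x (i + 1))) :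
    biorthFn x n i t = (2 * (t - x (i + 1)) + (t - x i)) / (x i - x (i + 1)) := by
  rw [biorthFn, if_neg (fun h => (not_lt.mpr ht.1) h.2.2), if_pos ⟨hi, ht⟩]

theorem hatFn_of_mem_left (hi : 0 < i) (ht : t ∈ Icc (x (i - 1)) (x i)) :
    hatFn x n i t = (t - x (i - 1)) / (x i - x (i - 1)) :=
  if_pos ⟨hi, ht⟩

-- The left-cell formula with the endpoints swapped, so that `integral_symm` reduces the
-- right-cell integrals to the left-cell ones.
theorem hatFn_of_mem_right (hi : i < n) (ht : t ∈ Ioc (x i) (x (i + 1))) :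
    hatFn x n i t = (t - x (i + 1)) / (x i - x (i + 1)) := by
  rw [hatFn, if_neg (fun h => (not_le.mpr ht.1) h.2.2), if_pos ⟨hi, ht.1.le, ht.2⟩,
    ← neg_div_neg_eq, neg_sub, neg_sub]

theorem integral_mul_biorthFn (hx : ∀ k < n, x k < x (k + 1)) (hi : 0 < i) (hin : i < n)
    {f F G : ℝ → ℝ} (hF : Continuous F) (hG : Continuous G)
    (hfF : EqOn f F (Ioo (x (i - 1)) (x i))) (hfG : EqOn f G (Ioo (x i) (x (i + 1)))) :
    ∫ t in x 0..x n, f t * biorthFn x n i t =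
      (∫ t in x (i - 1)..x i, F t * ((2 * (t - x (i - 1)) + (t - x i)) / (x i - x (i - 1)))) +
        ∫ t in x i..x (i + 1), G t * ((2 * (t - x (i + 1)) + (t - x i)) / (x i - x (i + 1))) := by
  have hmono := monotoneOn_grid hx
  have hl := grid_sub_one_lt hx hi hin.le
  have hr : x i < x (i + 1) := hx i hin
  have h0 : x 0 ≤ x (i - 1) := hmono (by simp) (by simp; omega) (Nat.zero_le _)
  have hn : x (i + 1) ≤ x n := hmono (by simp; omega) (by simp) (by omega)
  refine integral_eq_of_eqOn_Ioo_pieces h0 hl.le hr.le hn (by fun_prop) (by fun_prop)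
    ?_ ?_ ?_ ?_
  · intro t ht
    simp [biorthFn_eq_zero hl.le hr (fun h => (not_le.mpr ht.2) h.1)]
  · intro t ht
    simp only [hfF ht, biorthFn_of_mem_left hi ⟨ht.1.le, ht.2⟩]
  · intro t ht
    simp only [hfG ht, biorthFn_of_mem_right hin ⟨ht.1.le, ht.2⟩]
  · intro t ht
    simp [biorthFn_eq_zero hl.le hr (fun h => (not_lt.mpr ht.1.le) h.2)]

theorem integral_interpDeriv_mul_biorthFn (hx : ∀ k < n, x k < x (k + 1)) (hi : 0 < i)
    (hin : i < n) (u : ℝ → ℝ) :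
    ∫ t in x 0..x n, interpDeriv x n u t * biorthFn x n i t =
      (u (x (i + 1)) - u (x (i - 1))) / 2 := by
  have hleft : EqOn (interpDeriv x n u) (fun _ => slope u (x (i - 1)) (x i))
      (Ioo (x (i - 1)) (x i)) := by
    intro t ht
    have := interpDeriv_eq_slope hx u (j := i - 1) (by omega) (by rwa [Nat.sub_add_cancel hi])
    rwa [Nat.sub_add_cancel hi] at this
  rw [integral_mul_biorthFn hx hi hin continuous_const continuous_const hleft
      (fun t ht => interpDeriv_eq_slope hx u hin ht),
    integral_const_mul, integral_const_mul, integral_biorth_piece, integral_symm,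
    integral_biorth_piece]
  have hsl := sub_smul_slope u (x (i - 1)) (x i)
  have hsr := sub_smul_slope u (x i) (x (i + 1))
  simp only [smul_eq_mul, vsub_eq_sub] at hsl hsr
  linear_combination hsl / 2 + hsr / 2

theorem integral_hatFn_mul_biorthFn (hx : ∀ k < n, x k < x (k + 1)) (hi : 0 < i)
    (hin : i < n) :
    ∫ t in x 0..x n, hatFn x n i t * biorthFn x n i t = (x (i + 1) - x (i - 1)) / 2 := by
  rw [integral_mul_biorthFn hx hi hin (by fun_prop) (by fun_prop)
      (fun t ht => hatFn_of_mem_left hi ⟨ht.1.le, ht.2.le⟩)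
      (fun t ht => hatFn_of_mem_right hin ⟨ht.1, ht.2.le⟩),
    integral_hat_piece_mul_biorth_piece, integral_symm, integral_hat_piece_mul_biorth_piece]
  ring

theorem recGrad_eq_slope (hx : ∀ k < n, x k < x (k + 1)) (hi : 0 < i) (hin : i < n)
    (u : ℝ → ℝ) : recGrad x n u i = slope u (x (i - 1)) (x (i + 1)) := by
  rw [recGrad, integral_interpDeriv_mul_biorthFn hx hi hin, integral_hatFn_mul_biorthFn hx hi hin,
    div_div_div_cancel_right₀ two_ne_zero, slope_def_field]

end Grid

theorem recGrad_quadratic_exact_uniform_general (n : ℕ) (x : ℕ → ℝ)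
    (hx : ∀ i < n, x i < x (i+1)) (h : ℝ)
    (hunif : ∀ i : ℕ, 1 ≤ i → i ≤ n → x i - x (i-1) = h) (a b c : ℝ) :
    ∀ i : ℕ, 1 ≤ i → i < n →
      recGrad x n (fun t => a * t^2 + b * t + c) i = 2 * a * x i + b := by
  intro i hi hin
  have hl : x (i - 1) = x i - h := by linarith [hunif i hi hin.le]
  have hr : x (i + 1) = x i + h := by
    linarith [Nat.add_sub_cancel i 1 ▸ hunif (i + 1) (by omega) hin]
  have hlr : x (i - 1) ≠ x (i + 1) := ((grid_sub_one_lt hx hi hin.le).trans (hx i hin)).ne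
  rw [recGrad_eq_slope hx hi hin, slope_quadratic _ _ _ _ _ hlr, hl, hr]
  ring

/-- uniform grid: if the partition is uniform with stepsize `h > 0`, then
for `u(x) = a x² + b x + c` and every interior index `1 ≤ i ≤ n-1`, `g_i = u'(x_i)`
(with `u'(t) = 2 a t + b`). -/
theorem recGrad_quadratic_exact_uniform (n : ℕ) (x : ℕ → ℝ) (hn : 2 ≤ n)
    (hx : ∀ i < n, x i < x (i+1)) (h : ℝ) (hpos : 0 < h)
    (hunif : ∀ i : ℕ, 1 ≤ i → i ≤ n → x i - x (i-1) = h) (a b c : ℝ) :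
    ∀ i : ℕ, 1 ≤ i → i < n →
      recGrad x n (fun t => a * t^2 + b * t + c) i = 2 * a * x i + b :=
  recGrad_quadratic_exact_uniform_general n x hx h hunif a b c
end

section
/- (Inf-sup stability) There exists a constant β' > 0, independent of the partition, such that for every partition α = x_0 < x_1 < ... < x_n = β with n ≥ 2 and every function v_h = Σ_{i=0}^n c_i φ_i with coefficients c_i ∈ ℝ, one has ‖v_h‖_{L²(α,β)} ≤ β' · sup { (∫_α^β μ_h(x) v_h(x) dx) / ‖μ_h‖_{L²(α,β)} : μ_h = Σ_{i=0}^n d_i λ_i, d_i ∈ ℝ, μ_h ≠ 0 in L²(α,β) }, where ‖f‖_{L²(α,β)} = (∫_α^β f(x)² dx)^{1/2}. -/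
open intervalIntegral

/-!
On a cell `[x_j, x_{j+1}]` of length `h_j`, `v_h = Σ c_i φ_i` is affine with end values `c_j`,
`c_{j+1}`, and `μ_h = Σ d_i λ_i` is affine with one-sided end values `2 d_j - d_{j+1}`,
`2 d_{j+1} - d_j`. Integrating products of affine functions exactly gives
`‖v_h‖² = Σ h_j (c_j² + c_j c_{j+1} + c_{j+1}²) / 3`,
`∫ μ_h v_h = Σ h_j (d_j c_j + d_{j+1} c_{j+1}) / 2` and
`‖μ_h‖² = Σ h_j (d_j² - d_j d_{j+1} + d_{j+1}²)`.
Testing with `d = c` then gives, cell by cell, `‖v_h‖² ≤ ∫ μ_h v_h`, `‖μ_h‖² ≤ 4 ∫ μ_h v_h`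
and `‖v_h‖ ≤ ‖μ_h‖` (which settles the case `μ_h = 0`), so `‖v_h‖ ‖μ_h‖ ≤ 2 ∫ μ_h v_h` and
`β' = 2` works. Cauchy–Schwarz bounds every quotient by `‖v_h‖`, so the supremum is taken over
a set bounded above (`sSup` of an unbounded set of reals is `0`).
-/

open MeasureTheory Set

noncomputable def affineInterp (a b A B t : ℝ) : ℝ := (A * (b - t) + B * (t - a)) / (b - a)

theorem continuous_affineInterp (a b A B : ℝ) : Continuous (affineInterp a b A B) := by
  unfold affineInterp
  fun_prop

theorem integral_quadratic (a b p q r : ℝ) :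
    ∫ t in a..b, (p + q * t + r * t ^ 2)
      = p * (b - a) + q * (b ^ 2 - a ^ 2) / 2 + r * (b ^ 3 - a ^ 3) / 3 := by
  rw [intervalIntegral.integral_add (Continuous.intervalIntegrable (by fun_prop) _ _)
      (Continuous.intervalIntegrable (by fun_prop) _ _),
    intervalIntegral.integral_add (Continuous.intervalIntegrable (by fun_prop) _ _)
      (Continuous.intervalIntegrable (by fun_prop) _ _),
    intervalIntegral.integral_const_mul, intervalIntegral.integral_const_mul, integral_id,
    integral_pow, intervalIntegral.integral_const, smul_eq_mul]
  ring

theorem integral_affineInterp_mul_affineInterp {a b : ℝ} (hab : a ≠ b) (A B C D : ℝ) :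
    ∫ t in a..b, affineInterp a b A B t * affineInterp a b C D t
      = (b - a) * (2 * A * C + A * D + B * C + 2 * B * D) / 6 := by
  have hba : b - a ≠ 0 := sub_ne_zero.mpr hab.symm
  have hpoly : ∀ t, affineInterp a b A B t * affineInterp a b C D t
      = (A * b - B * a) * (C * b - D * a) / (b - a) ^ 2
        + ((A * b - B * a) * (D - C) + (B - A) * (C * b - D * a)) / (b - a) ^ 2 * t
        + (B - A) * (D - C) / (b - a) ^ 2 * t ^ 2 := by
    intro t
    unfold affineInterp
    field_simp
    ring
  simp only [hpoly, integral_quadratic]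
  field_simp
  ring

section Cell

variable {f g : ℝ → ℝ} {a b A B C D : ℝ}

theorem intervalIntegrable_mul_of_eqOn_affineInterp (hab : a ≤ b)
    (hf : EqOn f (affineInterp a b A B) (Ioo a b)) (hg : EqOn g (affineInterp a b C D) (Ioo a b)) :
    IntervalIntegrable (fun t => f t * g t) volume a b := by
  refine (intervalIntegrable_congr_uIoo ?_).mpr <|
    ((continuous_affineInterp a b A B).mul (continuous_affineInterp a b C D)).intervalIntegrable
      a b
  rw [uIoo_of_le hab]
  exact fun t ht => congr_arg₂ (· * ·) (hf ht) (hg ht)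

theorem integral_mul_of_eqOn_affineInterp (hab : a < b)
    (hf : EqOn f (affineInterp a b A B) (Ioo a b)) (hg : EqOn g (affineInterp a b C D) (Ioo a b)) :
    ∫ t in a..b, f t * g t = (b - a) * (2 * A * C + A * D + B * C + 2 * B * D) / 6 := by
  rw [← integral_affineInterp_mul_affineInterp hab.ne]
  refine intervalIntegral.integral_congr_Ioo_of_le hab.le fun t ht => ?_
  rw [hf ht, hg ht]

end Cell

theorem abs_integral_mul_le_sqrt_mul_sqrt {f g : ℝ → ℝ} {a b : ℝ} (hab : a ≤ b)
    (hf : IntervalIntegrable (fun t => f t ^ 2) volume a b)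
    (hg : IntervalIntegrable (fun t => g t ^ 2) volume a b)
    (hfg : IntervalIntegrable (fun t => f t * g t) volume a b) :
    |∫ t in a..b, f t * g t| ≤ √(∫ t in a..b, f t ^ 2) * √(∫ t in a..b, g t ^ 2) := by
  have hquad : ∀ s : ℝ, 0 ≤ (∫ t in a..b, g t ^ 2) * (s * s) + 2 * (∫ t in a..b, f t * g t) * s
      + ∫ t in a..b, f t ^ 2 := by
    intro s
    have hexp : ∫ t in a..b, (f t + s * g t) ^ 2
        = ∫ t in a..b, (f t ^ 2 + (2 * s) * (f t * g t) + (s * s) * g t ^ 2) :=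
      intervalIntegral.integral_congr fun t _ => by ring
    rw [intervalIntegral.integral_add (hf.add (hfg.const_mul _)) (hg.const_mul _),
      intervalIntegral.integral_add hf (hfg.const_mul _), intervalIntegral.integral_const_mul,
      intervalIntegral.integral_const_mul] at hexp
    linarith [intervalIntegral.integral_nonneg (μ := volume) hab fun t _ =>
      sq_nonneg (f t + s * g t)]
  have hdiscrim := discrim_le_zero hquad
  rw [discrim] at hdiscrim
  rw [← Real.sqrt_mul (intervalIntegral.integral_nonneg hab fun t _ => sq_nonneg (f t))]
  exact Real.abs_le_sqrt (by nlinarith)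

theorem le_mul_csSup_of_abs_le {S : Set ℝ} {a b : ℝ} (hb : 0 ≤ b) (hS : ∀ r ∈ S, |r| ≤ a)
    (ha : a = 0 ∨ ∃ r ∈ S, a ≤ b * r) : a ≤ b * sSup S := by
  rcases ha with rfl | ⟨r, hr, har⟩
  · exact mul_nonneg hb (Real.sSup_nonneg fun r hr => abs_nonpos_iff.mp (hS r hr) ▸ le_rfl)
  · exact har.trans (mul_le_mul_of_nonneg_left
      (le_csSup ⟨a, fun r hr => (le_abs_self r).trans (hS r hr)⟩ hr) hb)

section Partition

variable {x : ℕ → ℝ} {n : ℕ}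

theorem monotoneOn_Iic_of_lt_succ (hx : ∀ i < n, x i < x (i + 1)) : MonotoneOn x (Iic n) :=
  (strictMonoOn_Iic_of_lt_succ hx).monotoneOn

theorem notMem_Icc_of_mem_Ioo_of_ne (hx : ∀ i < n, x i < x (i + 1)) {j k : ℕ} (hj : j < n)
    (hk : k < n) (hkj : k ≠ j) {t : ℝ} (ht : t ∈ Ioo (x j) (x (j + 1))) :
    t ∉ Icc (x k) (x (k + 1)) := by
  have hmono := monotoneOn_Iic_of_lt_succ hx
  rintro ⟨htk, htk'⟩
  rcases hkj.lt_or_gt with h | h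
  · have : x (k + 1) ≤ x j := hmono (by simp; omega) (by simp; omega) h
    linarith [ht.1]
  · have : x (j + 1) ≤ x k := hmono (by simp; omega) (by simp; omega) h
    linarith [ht.2]

theorem hatFn_eq_zero_of_mem_Ioo (hx : ∀ i < n, x i < x (i + 1)) {i j : ℕ} (hj : j < n)
    (hi : i ≤ n) (hij : i ≠ j) (hij' : i ≠ j + 1) {t : ℝ} (ht : t ∈ Ioo (x j) (x (j + 1))) :
    hatFn x n i t = 0 := by
  have hleft : ¬(0 < i ∧ x (i - 1) ≤ t ∧ t ≤ x i) := fun ⟨hi0, hti⟩ =>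
    notMem_Icc_of_mem_Ioo_of_ne hx hj (k := i - 1) (by omega) (by omega) ht
      (by rwa [Nat.sub_add_cancel hi0])
  have hright : ¬(i < n ∧ x i ≤ t ∧ t ≤ x (i + 1)) := fun ⟨hin, hti⟩ =>
    notMem_Icc_of_mem_Ioo_of_ne hx hj hin hij ht hti
  rw [hatFn, if_neg hleft, if_neg hright]

theorem biorthFn_eq_zero_of_mem_Ioo (hx : ∀ i < n, x i < x (i + 1)) {i j : ℕ} (hj : j < n)
    (hi : i ≤ n) (hij : i ≠ j) (hij' : i ≠ j + 1) {t : ℝ} (ht : t ∈ Ioo (x j) (x (j + 1))) :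
    biorthFn x n i t = 0 := by
  have hleft : ¬(0 < i ∧ x (i - 1) ≤ t ∧ t < x i) := fun ⟨hi0, hti, hti'⟩ =>
    notMem_Icc_of_mem_Ioo_of_ne hx hj (k := i - 1) (by omega) (by omega) ht
      (by rw [Nat.sub_add_cancel hi0]; exact ⟨hti, hti'.le⟩)
  have hright : ¬(i < n ∧ x i ≤ t ∧ t < x (i + 1)) := fun ⟨hin, hti, hti'⟩ =>
    notMem_Icc_of_mem_Ioo_of_ne hx hj hin hij ht ⟨hti, hti'.le⟩
  rw [biorthFn, if_neg hleft, if_neg hright]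

theorem hatFn_of_mem_Ioo_left {j : ℕ} (hj : j < n) {t : ℝ} (ht : t ∈ Ioo (x j) (x (j + 1))) :
    hatFn x n j t = (x (j + 1) - t) / (x (j + 1) - x j) := by
  rw [hatFn, if_neg fun h => h.2.2.not_gt ht.1, if_pos ⟨hj, ht.1.le, ht.2.le⟩]

theorem hatFn_of_mem_Ioo_right {j : ℕ} {t : ℝ} (ht : t ∈ Ioo (x j) (x (j + 1))) :
    hatFn x n (j + 1) t = (t - x j) / (x (j + 1) - x j) := by
  rw [hatFn, if_pos ⟨j.succ_pos, by simpa using ht.1.le, ht.2.le⟩, Nat.add_sub_cancel]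

theorem biorthFn_of_mem_Ioo_left {j : ℕ} (hj : j < n) {t : ℝ} (ht : t ∈ Ioo (x j) (x (j + 1))) :
    biorthFn x n j t = (2 * (t - x (j + 1)) + (t - x j)) / (x j - x (j + 1)) := by
  rw [biorthFn, if_neg fun h => h.2.2.not_gt ht.1, if_pos ⟨hj, ht.1.le, ht.2⟩]

theorem biorthFn_of_mem_Ioo_right {j : ℕ} {t : ℝ} (ht : t ∈ Ioo (x j) (x (j + 1))) :
    biorthFn x n (j + 1) t = (2 * (t - x j) + (t - x (j + 1))) / (x (j + 1) - x j) := by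
  rw [biorthFn, if_pos ⟨j.succ_pos, by simpa using ht.1.le, ht.2⟩, Nat.add_sub_cancel]

theorem sum_hatFn_eqOn (hx : ∀ i < n, x i < x (i + 1)) {j : ℕ} (hj : j < n) (c : ℕ → ℝ) :
    EqOn (fun t => ∑ i ∈ Finset.range (n + 1), c i * hatFn x n i t)
      (affineInterp (x j) (x (j + 1)) (c j) (c (j + 1))) (Ioo (x j) (x (j + 1))) := by
  intro t ht
  have hne : x (j + 1) - x j ≠ 0 := (sub_pos.mpr (hx j hj)).ne'
  dsimp only
  rw [Finset.sum_eq_add_of_mem j (j + 1) (by simp; omega) (by simp; omega) (by omega)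
      fun i hi hij => by
        rw [hatFn_eq_zero_of_mem_Ioo hx hj (Nat.lt_succ_iff.mp (Finset.mem_range.mp hi))
          hij.1 hij.2 ht, mul_zero],
    hatFn_of_mem_Ioo_left hj ht, hatFn_of_mem_Ioo_right ht, affineInterp]
  field_simp

theorem sum_biorthFn_eqOn (hx : ∀ i < n, x i < x (i + 1)) {j : ℕ} (hj : j < n) (d : ℕ → ℝ) :
    EqOn (fun t => ∑ i ∈ Finset.range (n + 1), d i * biorthFn x n i t)
      (affineInterp (x j) (x (j + 1)) (2 * d j - d (j + 1)) (2 * d (j + 1) - d j))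
      (Ioo (x j) (x (j + 1))) := by
  intro t ht
  have hne : x (j + 1) - x j ≠ 0 := (sub_pos.mpr (hx j hj)).ne'
  have hne' : x j - x (j + 1) ≠ 0 := (sub_neg.mpr (hx j hj)).ne
  dsimp only
  rw [Finset.sum_eq_add_of_mem j (j + 1) (by simp; omega) (by simp; omega) (by omega)
      fun i hi hij => by
        rw [biorthFn_eq_zero_of_mem_Ioo hx hj (Nat.lt_succ_iff.mp (Finset.mem_range.mp hi))
          hij.1 hij.2 ht, mul_zero],
    biorthFn_of_mem_Ioo_left hj ht, biorthFn_of_mem_Ioo_right ht, affineInterp]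
  field_simp
  ring

section PiecewiseAffine

variable {f g : ℝ → ℝ} {A B C D : ℕ → ℝ}

theorem intervalIntegrable_mul_of_forall_eqOn_affineInterp (hx : ∀ i < n, x i < x (i + 1))
    (hf : ∀ j < n, EqOn f (affineInterp (x j) (x (j + 1)) (A j) (B j)) (Ioo (x j) (x (j + 1))))
    (hg : ∀ j < n, EqOn g (affineInterp (x j) (x (j + 1)) (C j) (D j)) (Ioo (x j) (x (j + 1)))) :
    IntervalIntegrable (fun t => f t * g t) volume (x 0) (x n) :=
  IntervalIntegrable.trans_iterate fun j hj =>
    intervalIntegrable_mul_of_eqOn_affineInterp (hx j hj).le (hf j hj) (hg j hj)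

theorem integral_mul_of_forall_eqOn_affineInterp (hx : ∀ i < n, x i < x (i + 1))
    (hf : ∀ j < n, EqOn f (affineInterp (x j) (x (j + 1)) (A j) (B j)) (Ioo (x j) (x (j + 1))))
    (hg : ∀ j < n, EqOn g (affineInterp (x j) (x (j + 1)) (C j) (D j)) (Ioo (x j) (x (j + 1)))) :
    ∫ t in x 0..x n, f t * g t = ∑ j ∈ Finset.range n,
      (x (j + 1) - x j) * (2 * A j * C j + A j * D j + B j * C j + 2 * B j * D j) / 6 := by
  rw [← intervalIntegral.sum_integral_adjacent_intervals fun j hj =>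
    intervalIntegrable_mul_of_eqOn_affineInterp (hx j hj).le (hf j hj) (hg j hj)]
  exact Finset.sum_congr rfl fun j hj =>
    integral_mul_of_eqOn_affineInterp (hx j (Finset.mem_range.mp hj))
      (hf j (Finset.mem_range.mp hj)) (hg j (Finset.mem_range.mp hj))

end PiecewiseAffine

theorem integral_sq_sum_hatFn (hx : ∀ i < n, x i < x (i + 1)) (c : ℕ → ℝ) :
    ∫ t in x 0..x n, (∑ i ∈ Finset.range (n + 1), c i * hatFn x n i t) ^ 2
      = ∑ j ∈ Finset.range n,
          (x (j + 1) - x j) * (c j ^ 2 + c j * c (j + 1) + c (j + 1) ^ 2) / 3 := by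
  simp_rw [sq]
  rw [integral_mul_of_forall_eqOn_affineInterp hx (fun j hj => sum_hatFn_eqOn hx hj c)
    (fun j hj => sum_hatFn_eqOn hx hj c)]
  exact Finset.sum_congr rfl fun j _ => by ring

theorem integral_sq_sum_biorthFn (hx : ∀ i < n, x i < x (i + 1)) (d : ℕ → ℝ) :
    ∫ t in x 0..x n, (∑ i ∈ Finset.range (n + 1), d i * biorthFn x n i t) ^ 2
      = ∑ j ∈ Finset.range n,
          (x (j + 1) - x j) * (d j ^ 2 - d j * d (j + 1) + d (j + 1) ^ 2) := by
  simp_rw [sq]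
  rw [integral_mul_of_forall_eqOn_affineInterp hx (fun j hj => sum_biorthFn_eqOn hx hj d)
    (fun j hj => sum_biorthFn_eqOn hx hj d)]
  exact Finset.sum_congr rfl fun j _ => by ring

theorem integral_sum_biorthFn_mul_sum_hatFn (hx : ∀ i < n, x i < x (i + 1)) (d c : ℕ → ℝ) :
    ∫ t in x 0..x n, (∑ i ∈ Finset.range (n + 1), d i * biorthFn x n i t) *
        (∑ i ∈ Finset.range (n + 1), c i * hatFn x n i t)
      = ∑ j ∈ Finset.range n, (x (j + 1) - x j) * (d j * c j + d (j + 1) * c (j + 1)) / 2 := by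
  rw [integral_mul_of_forall_eqOn_affineInterp hx (fun j hj => sum_biorthFn_eqOn hx hj d)
    (fun j hj => sum_hatFn_eqOn hx hj c)]
  exact Finset.sum_congr rfl fun j _ => by ring

theorem abs_integral_sum_biorthFn_mul_sum_hatFn_le (hx : ∀ i < n, x i < x (i + 1))
    (d c : ℕ → ℝ) :
    |∫ t in x 0..x n, (∑ i ∈ Finset.range (n + 1), d i * biorthFn x n i t) *
        (∑ i ∈ Finset.range (n + 1), c i * hatFn x n i t)|
      ≤ √(∫ t in x 0..x n, (∑ i ∈ Finset.range (n + 1), d i * biorthFn x n i t) ^ 2) *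
        √(∫ t in x 0..x n, (∑ i ∈ Finset.range (n + 1), c i * hatFn x n i t) ^ 2) := by
  have hμ := fun j (hj : j < n) => sum_biorthFn_eqOn hx hj d
  have hv := fun j (hj : j < n) => sum_hatFn_eqOn hx hj c
  refine abs_integral_mul_le_sqrt_mul_sqrt
    ((monotoneOn_Iic_of_lt_succ hx) (by simp) (by simp) n.zero_le) ?_ ?_
    (intervalIntegrable_mul_of_forall_eqOn_affineInterp hx hμ hv)
  · simpa only [sq] using intervalIntegrable_mul_of_forall_eqOn_affineInterp hx hμ hμ
  · simpa only [sq] using intervalIntegrable_mul_of_forall_eqOn_affineInterp hx hv hv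

theorem integral_sq_sum_hatFn_le_integral_sq_sum_biorthFn (hx : ∀ i < n, x i < x (i + 1))
    (c : ℕ → ℝ) :
    ∫ t in x 0..x n, (∑ i ∈ Finset.range (n + 1), c i * hatFn x n i t) ^ 2
      ≤ ∫ t in x 0..x n, (∑ i ∈ Finset.range (n + 1), c i * biorthFn x n i t) ^ 2 := by
  rw [integral_sq_sum_hatFn hx, integral_sq_sum_biorthFn hx]
  refine Finset.sum_le_sum fun j hj => ?_
  have hh := sub_pos.mpr (hx j (Finset.mem_range.mp hj))
  nlinarith [mul_nonneg hh.le (sq_nonneg (c j - c (j + 1)))]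

theorem sqrt_integral_sq_sum_hatFn_mul_sqrt_le (hx : ∀ i < n, x i < x (i + 1)) (c : ℕ → ℝ) :
    √(∫ t in x 0..x n, (∑ i ∈ Finset.range (n + 1), c i * hatFn x n i t) ^ 2) *
        √(∫ t in x 0..x n, (∑ i ∈ Finset.range (n + 1), c i * biorthFn x n i t) ^ 2)
      ≤ 2 * ∫ t in x 0..x n, (∑ i ∈ Finset.range (n + 1), c i * biorthFn x n i t) *
        (∑ i ∈ Finset.range (n + 1), c i * hatFn x n i t) := by
  have hcell : ∀ j ∈ Finset.range n, 0 < x (j + 1) - x j := fun j hj =>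
    sub_pos.mpr (hx j (Finset.mem_range.mp hj))
  have hv_le : ∫ t in x 0..x n, (∑ i ∈ Finset.range (n + 1), c i * hatFn x n i t) ^ 2
      ≤ ∫ t in x 0..x n, (∑ i ∈ Finset.range (n + 1), c i * biorthFn x n i t) *
        (∑ i ∈ Finset.range (n + 1), c i * hatFn x n i t) := by
    rw [integral_sq_sum_hatFn hx, integral_sum_biorthFn_mul_sum_hatFn hx]
    exact Finset.sum_le_sum fun j hj => by
      nlinarith [mul_nonneg (hcell j hj).le (sq_nonneg (c j - c (j + 1)))]
  have hμ_le : ∫ t in x 0..x n, (∑ i ∈ Finset.range (n + 1), c i * biorthFn x n i t) ^ 2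
      ≤ 4 * ∫ t in x 0..x n, (∑ i ∈ Finset.range (n + 1), c i * biorthFn x n i t) *
        (∑ i ∈ Finset.range (n + 1), c i * hatFn x n i t) := by
    rw [integral_sq_sum_biorthFn hx, integral_sum_biorthFn_mul_sum_hatFn hx, Finset.mul_sum]
    exact Finset.sum_le_sum fun j hj => by
      have hh := (hcell j hj).le
      nlinarith [mul_nonneg hh (sq_nonneg (c j + c (j + 1))), mul_nonneg hh (sq_nonneg (c j)),
        mul_nonneg hh (sq_nonneg (c (j + 1)))]
  have hx0n := (monotoneOn_Iic_of_lt_succ hx) (by simp) (by simp) n.zero_le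
  have hv0 := intervalIntegral.integral_nonneg (μ := volume) hx0n fun t _ =>
    sq_nonneg (∑ i ∈ Finset.range (n + 1), c i * hatFn x n i t)
  have hμ0 := intervalIntegral.integral_nonneg (μ := volume) hx0n fun t _ =>
    sq_nonneg (∑ i ∈ Finset.range (n + 1), c i * biorthFn x n i t)
  rw [← Real.sqrt_mul hv0, Real.sqrt_le_iff]
  exact ⟨by linarith, by nlinarith [mul_le_mul hv_le hμ_le hμ0 (hv0.trans hv_le)]⟩

end Partition

/-- inf-sup stability: there is a constant `β' > 0`, independent of the
partition, such that for every partition with `n ≥ 2` and every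
`v_h = Σ_i c_i φ_i`,
`‖v_h‖_{L²(α,β)} ≤ β' · sup { (∫_α^β μ_h v_h dx) / ‖μ_h‖_{L²(α,β)} : μ_h = Σ_i d_i λ_i, μ_h ≠ 0 in L² }`,
where `‖f‖_{L²(α,β)} = (∫_α^β f² dx)^{1/2}`. -/
theorem biorth_infsup_stability :
    ∃ β' : ℝ, 0 < β' ∧
      ∀ (n : ℕ) (x : ℕ → ℝ), 2 ≤ n → (∀ i < n, x i < x (i+1)) →
        ∀ c : ℕ → ℝ,
          Real.sqrt (∫ t in (x 0)..(x n),
              (∑ i ∈ Finset.range (n+1), c i * hatFn x n i t)^2)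
            ≤ β' * sSup { r : ℝ | ∃ d : ℕ → ℝ,
                Real.sqrt (∫ t in (x 0)..(x n),
                    (∑ i ∈ Finset.range (n+1), d i * biorthFn x n i t)^2) ≠ 0 ∧
                r = (∫ t in (x 0)..(x n),
                      (∑ i ∈ Finset.range (n+1), d i * biorthFn x n i t) *
                      (∑ i ∈ Finset.range (n+1), c i * hatFn x n i t)) /
                    Real.sqrt (∫ t in (x 0)..(x n),
                      (∑ i ∈ Finset.range (n+1), d i * biorthFn x n i t)^2) } := by
  refine ⟨2, two_pos, fun n x _ hx c => le_mul_csSup_of_abs_le zero_le_two ?_ ?_⟩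
  · rintro r ⟨d, hd, rfl⟩
    rw [abs_div, abs_of_nonneg (Real.sqrt_nonneg _),
      div_le_iff₀ ((Real.sqrt_nonneg _).lt_of_ne' hd), mul_comm]
    exact abs_integral_sum_biorthFn_mul_sum_hatFn_le hx d c
  · rcases (Real.sqrt_nonneg (∫ t in x 0..x n,
        (∑ i ∈ Finset.range (n + 1), c i * biorthFn x n i t) ^ 2)).eq_or_lt with hμ | hμ
    · exact Or.inl (Real.sqrt_eq_zero'.mpr
        ((integral_sq_sum_hatFn_le_integral_sq_sum_biorthFn hx c).trans
          (Real.sqrt_eq_zero'.mp hμ.symm)))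
    · refine Or.inr ⟨_, ⟨c, hμ.ne', rfl⟩, ?_⟩
      rw [mul_div_assoc', le_div_iff₀ hμ]
      exact sqrt_integral_sq_sum_hatFn_mul_sqrt_le hx c
end
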